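/- arXiv:2308.10301 — 5 statements merged into one kernel-verified Lean document; each statement's English description precedes it below -/
import Mathlib

section
/- For every integer n > 1, the integer complexity satisfies f(n) ≥ 3 · log₃(n), i.e., n ≤ 3^(f(n)/3). -/
/-- `IsIC n k` : there is an arithmetic expression built from the constant 1
using additions and multiplications that evaluates to `n` and uses `k` ones. -/
inductive IsIC : ℕ → ℕ → Prop
  | one : IsIC 1 1
  | add {a b m k : ℕ} : IsIC a m → IsIC b k → IsIC (a + b) (m + k)
  | mul {a b m k : ℕ} : IsIC a m → IsIC b k → IsIC (a * b) (m + k)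

/-- The integer complexity of `n`: the minimum number of 1's needed. -/
noncomputable def intComplexity (n : ℕ) : ℕ := sInf {k | IsIC n k}

private lemma three_rpow_pos (x : ℝ) : 0 < (3:ℝ) ^ x :=
  Real.rpow_pos_of_pos (by norm_num) x

private lemma three_rpow_mono {x y : ℝ} (h : x ≤ y) : (3:ℝ) ^ x ≤ (3:ℝ) ^ y :=
  (Real.rpow_le_rpow_left_iff (by norm_num)).2 h

private lemma cube_le {c x : ℝ} (hc : 0 ≤ c) (h : c ^ (3:ℕ) ≤ (3:ℝ) ^ (x * 3)) :
    c ≤ (3:ℝ) ^ x := by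
  rw [← pow_le_pow_iff_left₀ hc (three_rpow_pos x).le (three : (3:ℕ) ≠ 0)]
  rwa [← Real.rpow_natCast ((3:ℝ) ^ x) 3, ← Real.rpow_mul (by norm_num)]
where three : (3:ℕ) ≠ 0 := by norm_num

private lemma two_le : (2:ℝ) ≤ (3:ℝ) ^ ((2:ℝ)/3) := by
  apply cube_le (by norm_num)
  rw [show ((2:ℝ)/3) * 3 = 2 by ring, show ((2:ℝ)) = ((2:ℕ):ℝ) by norm_num,
    Real.rpow_natCast]
  norm_num

private lemma fourthird_le : (4:ℝ)/3 ≤ (3:ℝ) ^ ((1:ℝ)/3) := by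
  apply cube_le (by norm_num)
  rw [show ((1:ℝ)/3) * 3 = 1 by ring, Real.rpow_one]
  norm_num

private lemma lt_two : (3:ℝ) ^ ((1:ℝ)/3) < 2 := by
  by_contra h
  push_neg at h
  have := pow_le_pow_left₀ (by norm_num : (0:ℝ) ≤ 2) h 3
  rw [← Real.rpow_natCast ((3:ℝ) ^ ((1:ℝ)/3)) 3, ← Real.rpow_mul (by norm_num),
    show ((1:ℝ)/3) * (3:ℕ) = 1 by push_cast; ring, Real.rpow_one] at this
  norm_num at this

private lemma lt_three : (3:ℝ) ^ ((2:ℝ)/3) < 3 := by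
  by_contra h
  push_neg at h
  have := pow_le_pow_left₀ (by norm_num : (0:ℝ) ≤ 3) h 3
  rw [← Real.rpow_natCast ((3:ℝ) ^ ((2:ℝ)/3)) 3, ← Real.rpow_mul (by norm_num),
    show ((2:ℝ)/3) * (3:ℕ) = 2 by push_cast; ring,
    show ((2:ℝ)) = ((2:ℕ):ℝ) by norm_num, Real.rpow_natCast] at this
  norm_num at this

private lemma one_add_aux {b m k : ℕ} (hb : 1 ≤ b) (hm : 1 ≤ m) (hk : 1 ≤ k)
    (hB : (b:ℝ) ≤ (3:ℝ) ^ ((k:ℝ)/3)) :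
    (1:ℝ) + (b:ℝ) ≤ (3:ℝ) ^ (((m:ℝ) + (k:ℝ))/3) := by
  have step : (1:ℝ) + (b:ℝ) ≤ (3:ℝ) ^ ((1 + (k:ℝ))/3) := by
    rcases Nat.lt_or_ge k 3 with hk3 | hk3
    · interval_cases k
      · -- k = 1 : b ≤ 3^(1/3) < 2 so b = 1
        have hB' : (b:ℝ) ≤ (3:ℝ) ^ ((1:ℝ)/3) := by exact_mod_cast hB
        have hb2 : (b:ℝ) < 2 := lt_of_le_of_lt hB' lt_two
        have hbe : b = 1 := by
          have : b < 2 := by exact_mod_cast hb2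
          omega
        subst hbe
        have : (1 + ((1:ℕ):ℝ))/3 = (2:ℝ)/3 := by norm_num
        rw [this]
        push_cast
        have := two_le
        linarith
      · -- k = 2 : b ≤ 3^(2/3) < 3 so b ≤ 2
        have hB' : (b:ℝ) ≤ (3:ℝ) ^ ((2:ℝ)/3) := by exact_mod_cast hB
        have hb3 : (b:ℝ) < 3 := lt_of_le_of_lt hB' lt_three
        have hble : b ≤ 2 := by
          have : b < 3 := by exact_mod_cast hb3
          omega
        have : (1:ℝ) + (b:ℝ) ≤ 3 := by
          have : (b:ℝ) ≤ 2 := by exact_mod_cast hble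
          linarith
        have h1 : (1 + ((2:ℕ):ℝ))/3 = (1:ℝ) := by norm_num
        rw [h1, Real.rpow_one]
        exact this
    · -- k ≥ 3
      have ht : (3:ℝ) ≤ (3:ℝ) ^ ((k:ℝ)/3) := by
        calc (3:ℝ) = (3:ℝ) ^ (1:ℝ) := (Real.rpow_one 3).symm
          _ ≤ (3:ℝ) ^ ((k:ℝ)/3) := by
              apply three_rpow_mono
              have : (3:ℝ) ≤ (k:ℝ) := by exact_mod_cast hk3
              linarith
      have hsplit : (3:ℝ) ^ ((1 + (k:ℝ))/3) = (3:ℝ) ^ ((1:ℝ)/3) * (3:ℝ) ^ ((k:ℝ)/3) := by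
        rw [← Real.rpow_add (by norm_num)]
        ring_nf
      rw [hsplit]
      have h1 : (4:ℝ)/3 * (3:ℝ) ^ ((k:ℝ)/3) ≤ (3:ℝ) ^ ((1:ℝ)/3) * (3:ℝ) ^ ((k:ℝ)/3) :=
        mul_le_mul_of_nonneg_right fourthird_le (three_rpow_pos _).le
      nlinarith [three_rpow_pos ((k:ℝ)/3)]
  calc (1:ℝ) + (b:ℝ) ≤ (3:ℝ) ^ ((1 + (k:ℝ))/3) := step
    _ ≤ (3:ℝ) ^ (((m:ℝ) + (k:ℝ))/3) := by
        apply three_rpow_mono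
        have : (1:ℝ) ≤ (m:ℝ) := by exact_mod_cast hm
        linarith

private lemma key {n k : ℕ} (h : IsIC n k) :
    1 ≤ n ∧ 1 ≤ k ∧ (n:ℝ) ≤ (3:ℝ) ^ ((k:ℝ)/3) := by
  induction h with
  | one =>
    refine ⟨le_refl 1, le_refl 1, ?_⟩
    push_cast
    calc (1:ℝ) = (3:ℝ) ^ (0:ℝ) := (Real.rpow_zero 3).symm
      _ ≤ (3:ℝ) ^ ((1:ℝ)/3) := three_rpow_mono (by norm_num)
  | @add a b m k ha hb iha ihb =>
    obtain ⟨ha1, hm1, hA⟩ := iha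
    obtain ⟨hb1, hk1, hB⟩ := ihb
    refine ⟨by omega, by omega, ?_⟩
    push_cast
    rcases Nat.lt_or_ge a 2 with ha2 | ha2
    · have : a = 1 := by omega
      subst this
      push_cast
      exact one_add_aux hb1 hm1 hk1 hB
    · rcases Nat.lt_or_ge b 2 with hb2 | hb2
      · have : b = 1 := by omega
        subst this
        push_cast
        rw [add_comm (a:ℝ) 1, show (m:ℝ) + (k:ℝ) = (k:ℝ) + (m:ℝ) by ring]
        exact one_add_aux ha1 hk1 hm1 hA
      · have hab : (a:ℝ) + (b:ℝ) ≤ (a:ℝ) * (b:ℝ) := by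
          exact_mod_cast Nat.add_le_mul ha2 hb2
        calc (a:ℝ) + (b:ℝ) ≤ (a:ℝ) * (b:ℝ) := hab
          _ ≤ (3:ℝ) ^ ((m:ℝ)/3) * (3:ℝ) ^ ((k:ℝ)/3) := by
              apply mul_le_mul hA hB (by positivity) (three_rpow_pos _).le
          _ = (3:ℝ) ^ (((m:ℝ) + (k:ℝ))/3) := by
              rw [← Real.rpow_add (by norm_num)]; ring_nf
  | @mul a b m k ha hb iha ihb =>
    obtain ⟨ha1, hm1, hA⟩ := iha
    obtain ⟨hb1, hk1, hB⟩ := ihb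
    refine ⟨Nat.one_le_iff_ne_zero.2 (by positivity), by omega, ?_⟩
    push_cast
    calc (a:ℝ) * (b:ℝ) ≤ (3:ℝ) ^ ((m:ℝ)/3) * (3:ℝ) ^ ((k:ℝ)/3) := by
          apply mul_le_mul hA hB (by positivity) (three_rpow_pos _).le
      _ = (3:ℝ) ^ (((m:ℝ) + (k:ℝ))/3) := by
          rw [← Real.rpow_add (by norm_num)]; ring_nf

private lemma isIC_self : ∀ n : ℕ, 1 ≤ n → IsIC n n := by
  intro n hn
  induction n with
  | zero => omega
  | succ m ih =>
    rcases Nat.lt_or_ge m 1 with hm | hm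
    · have : m = 0 := by omega
      subst this
      exact IsIC.one
    · exact IsIC.add (ih hm) IsIC.one

theorem intComplexity_lower_bound (n : ℕ) (hn : 1 < n) :
    3 * Real.logb 3 n ≤ (intComplexity n : ℝ) ∧
    (n : ℝ) ≤ (3 : ℝ) ^ ((intComplexity n : ℝ) / 3) := by
  have hne : {k | IsIC n k}.Nonempty := ⟨n, isIC_self n (by omega)⟩
  have hmem : IsIC n (intComplexity n) := Nat.sInf_mem hne
  obtain ⟨-, -, hbound⟩ := key hmem
  refine ⟨?_, hbound⟩
  have hn0 : (0:ℝ) < (n:ℝ) := by exact_mod_cast Nat.lt_of_lt_of_le Nat.zero_lt_one hn.le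
  have hlog : Real.logb 3 n ≤ (intComplexity n : ℝ) / 3 := by
    calc Real.logb 3 n ≤ Real.logb 3 ((3:ℝ) ^ ((intComplexity n : ℝ) / 3)) :=
          (Real.logb_le_logb (by norm_num) hn0 (three_rpow_pos _)).2 hbound
      _ = (intComplexity n : ℝ) / 3 := Real.logb_rpow (by norm_num) (by norm_num)
  linarith
end

section
/- For every positive integer k, the integer complexity of 3^k equals 3k: f(3^k) = 3k. -/
lemma isIC_three : IsIC 3 3 :=
  IsIC.add (IsIC.add IsIC.one IsIC.one) IsIC.one

lemma isIC_pow_three (k : ℕ) (hk : 1 ≤ k) : IsIC (3 ^ k) (3 * k) := by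
  induction k with
  | zero => omega
  | succ n ih =>
    rcases Nat.eq_or_lt_of_le hk with h | h
    · have hn0 : n = 0 := by omega
      subst hn0
      simpa using isIC_three
    · have hn : 1 ≤ n := by omega
      have := IsIC.mul (ih hn) isIC_three
      have e1 : 3 ^ n * 3 = 3 ^ (n + 1) := by ring
      have e2 : 3 * n + 3 = 3 * (n + 1) := by ring
      rwa [e1, e2] at this

lemma isIC_bound {n k : ℕ} (h : IsIC n k) : 1 ≤ n ∧ 1 ≤ k ∧ n ^ 3 ≤ 3 ^ k := by
  induction h with
  | one => norm_num
  | add ha hb iha ihb =>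
    rename_i a b m k
    obtain ⟨ha1, hm1, hab⟩ := iha
    obtain ⟨hb1, hk1, hbb⟩ := ihb
    refine ⟨by omega, by omega, ?_⟩
    rw [pow_add]
    -- key inequality
    rcases Nat.lt_or_ge a 2 with h2 | h2
    · -- a = 1
      have ha' : a = 1 := by omega
      subst ha'
      have h3m : 3 ≤ 3 ^ m := by
        calc 3 = 3 ^ 1 := by norm_num
        _ ≤ 3 ^ m := Nat.pow_le_pow_right (by norm_num) hm1
      rcases Nat.lt_or_ge b 3 with h3 | h3
      · interval_cases b
        · -- b = 1
          have h3k : 3 ≤ 3 ^ k := by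
            calc 3 = 3 ^ 1 := by norm_num
            _ ≤ 3 ^ k := Nat.pow_le_pow_right (by norm_num) hk1
          nlinarith
        · -- b = 2
          have hk2 : 2 ≤ k := by
            by_contra hc
            interval_cases k <;> simp_all
          have h9k : 9 ≤ 3 ^ k := by
            calc 9 = 3 ^ 2 := by norm_num
            _ ≤ 3 ^ k := Nat.pow_le_pow_right (by norm_num) hk2
          nlinarith
      · have hb2 : 3 * b ^ 2 ≤ b ^ 3 := by
          calc 3 * b ^ 2 ≤ b * b ^ 2 := Nat.mul_le_mul_right _ h3
          _ = b ^ 3 := by ring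
        have key : (1 + b) ^ 3 ≤ 3 * b ^ 3 := by nlinarith
        calc (1 + b) ^ 3 ≤ 3 * b ^ 3 := key
        _ ≤ 3 ^ m * 3 ^ k := by
          apply Nat.mul_le_mul
          · omega
          · exact hbb
    · rcases Nat.lt_or_ge b 2 with h2b | h2b
      · -- b = 1
        have hb' : b = 1 := by omega
        subst hb'
        have h3k : 3 ≤ 3 ^ k := by
          calc 3 = 3 ^ 1 := by norm_num
          _ ≤ 3 ^ k := Nat.pow_le_pow_right (by norm_num) hk1
        rcases Nat.lt_or_ge a 3 with h3 | h3
        · interval_cases a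
          · have hm2 : 2 ≤ m := by
              by_contra hc
              interval_cases m <;> simp_all
            have h9m : 9 ≤ 3 ^ m := by
              calc 9 = 3 ^ 2 := by norm_num
              _ ≤ 3 ^ m := Nat.pow_le_pow_right (by norm_num) hm2
            nlinarith
        · have ha2 : 3 * a ^ 2 ≤ a ^ 3 := by
            calc 3 * a ^ 2 ≤ a * a ^ 2 := Nat.mul_le_mul_right _ h3
            _ = a ^ 3 := by ring
          calc (a + 1) ^ 3 ≤ a ^ 3 * 3 := by nlinarith
          _ ≤ 3 ^ m * 3 ^ k := Nat.mul_le_mul hab h3k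
      · -- a, b ≥ 2 : a + b ≤ a * b
        have hle : a + b ≤ a * b := by nlinarith
        calc (a + b) ^ 3 ≤ (a * b) ^ 3 := Nat.pow_le_pow_left hle 3
        _ = a ^ 3 * b ^ 3 := by ring
        _ ≤ 3 ^ m * 3 ^ k := Nat.mul_le_mul hab hbb
  | mul ha hb iha ihb =>
    rename_i a b m k
    obtain ⟨ha1, hm1, hab⟩ := iha
    obtain ⟨hb1, hk1, hbb⟩ := ihb
    refine ⟨Nat.one_le_iff_ne_zero.mpr (by positivity), by omega, ?_⟩
    rw [pow_add]
    calc (a * b) ^ 3 = a ^ 3 * b ^ 3 := by ring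
    _ ≤ 3 ^ m * 3 ^ k := Nat.mul_le_mul hab hbb

theorem intComplexity_pow_three (k : ℕ) (hk : 1 ≤ k) :
    intComplexity (3 ^ k) = 3 * k := by
  have hmem : (3 * k) ∈ {m | IsIC (3 ^ k) m} := isIC_pow_three k hk
  apply le_antisymm
  · exact Nat.sInf_le hmem
  · have hne : {m | IsIC (3 ^ k) m}.Nonempty := ⟨3 * k, hmem⟩
    have hin := Nat.sInf_mem hne
    have := (isIC_bound hin).2.2
    have h33 : (3 : ℕ) ^ (3 * k) ≤ 3 ^ (intComplexity (3 ^ k)) := by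
      calc (3 : ℕ) ^ (3 * k) = (3 ^ k) ^ 3 := by rw [← pow_mul, Nat.mul_comm]
      _ ≤ _ := this
    exact (Nat.pow_le_pow_iff_right (by norm_num)).mp h33
end

section
/- Suppose f(n) ≤ α·log₃(n) holds for all integers n > 1 with a constant α < 6. Then for any integer n > 1, if f(n) = f(i) + f(n−i) for some 1 ≤ i ≤ n−i (i.e., the optimal expression for n ends in an addition with smaller part i), then i ≤ n^ℓ where ℓ is the solution of 3ℓ·log₃ n + 3·log₃(n − n^ℓ) = α·log₃ n; in particular, for n sufficiently large, i ≤ n^{α/3 − 1 + ε} for any ε > 0. -/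
lemma IsIC.pos {n k : ℕ} (h : IsIC n k) : 1 ≤ n ∧ 1 ≤ k := by
  induction h with
  | one => omega
  | add _ _ ih1 ih2 => omega
  | @mul a b m k _ _ ih1 ih2 =>
    refine ⟨?_, by omega⟩
    have := Nat.mul_le_mul ih1.1 ih2.1
    simpa using this

lemma IsIC.two_le {n k : ℕ} (h : IsIC n k) (hn : 2 ≤ n) : 2 ≤ k := by
  induction h with
  | one => omega
  | add h1 h2 ih1 ih2 => have := h1.pos; have := h2.pos; omega
  | mul h1 h2 ih1 ih2 => have := h1.pos; have := h2.pos; omega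

lemma cube_aux {b k : ℕ} (hb : IsIC b k) (ih : b ^ 3 ≤ 3 ^ k) :
    (1 + b) ^ 3 ≤ 3 ^ (1 + k) := by
  have hb1 : 1 ≤ b := hb.pos.1
  have hk1 : 1 ≤ k := hb.pos.2
  rcases Nat.lt_or_ge b 3 with h3 | h3
  · interval_cases b
    · calc (1 + 1) ^ 3 = 8 := by norm_num
        _ ≤ 3 ^ (1 + 1) := by norm_num
        _ ≤ 3 ^ (1 + k) := Nat.pow_le_pow_right (by norm_num) (by omega)
    · have hk2 : 2 ≤ k := hb.two_le (by norm_num)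
      calc (1 + 2) ^ 3 = 27 := by norm_num
        _ = 3 ^ (1 + 2) := by norm_num
        _ ≤ 3 ^ (1 + k) := Nat.pow_le_pow_right (by norm_num) (by omega)
  · have hA : 3 * b ≤ b * b := Nat.mul_le_mul_right b h3
    have hB : 3 * (b * b) ≤ b * (b * b) := Nat.mul_le_mul_right (b * b) h3
    calc (1 + b) ^ 3 ≤ 3 * b ^ 3 := by nlinarith [hA, hB]
      _ ≤ 3 * 3 ^ k := Nat.mul_le_mul_left 3 ih
      _ = 3 ^ (1 + k) := by rw [pow_add, pow_one]

lemma IsIC.cube {n k : ℕ} (h : IsIC n k) : n ^ 3 ≤ 3 ^ k := by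
  induction h with
  | one => norm_num
  | @mul a b m k h1 h2 ih1 ih2 =>
    calc (a * b) ^ 3 = a ^ 3 * b ^ 3 := by ring
      _ ≤ 3 ^ m * 3 ^ k := Nat.mul_le_mul ih1 ih2
      _ = 3 ^ (m + k) := (pow_add 3 m k).symm
  | @add a b m k h1 h2 ih1 ih2 =>
    have ham := h1.pos
    have hbk := h2.pos
    rcases Nat.lt_or_ge m 2 with hm | hm
    · have ha : a = 1 := by
        by_contra hne
        have := h1.two_le (by omega)
        omega
      have hm1 : m = 1 := by omega
      subst ha hm1
      exact cube_aux h2 ih2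
    rcases Nat.lt_or_ge k 2 with hk | hk
    · have hb : b = 1 := by
        by_contra hne
        have := h2.two_le (by omega)
        omega
      have hk1 : k = 1 := by omega
      subst hb hk1
      calc (a + 1) ^ 3 = (1 + a) ^ 3 := by ring
        _ ≤ 3 ^ (1 + m) := cube_aux h1 ih1
        _ = 3 ^ (m + 1) := by rw [Nat.add_comm]
    · rcases le_total a b with hab | hab
      · calc (a + b) ^ 3 ≤ (2 * b) ^ 3 := Nat.pow_le_pow_left (by omega) 3
          _ = 8 * b ^ 3 := by ring
          _ ≤ 9 * 3 ^ k := by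
              have h8 := Nat.mul_le_mul_left 8 ih2
              omega
          _ = 3 ^ (2 + k) := by rw [pow_add]; norm_num
          _ ≤ 3 ^ (m + k) := Nat.pow_le_pow_right (by norm_num) (by omega)
      · calc (a + b) ^ 3 ≤ (2 * a) ^ 3 := Nat.pow_le_pow_left (by omega) 3
          _ = 8 * a ^ 3 := by ring
          _ ≤ 9 * 3 ^ m := by
              have h8 := Nat.mul_le_mul_left 8 ih1
              omega
          _ = 3 ^ (2 + m) := by rw [pow_add]; norm_num
          _ ≤ 3 ^ (m + k) := Nat.pow_le_pow_right (by norm_num) (by omega)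

lemma isIC_self_s11 (n : ℕ) (hn : 1 ≤ n) : IsIC n n := by
  induction n with
  | zero => omega
  | succ n ih =>
    rcases Nat.eq_or_lt_of_le hn with h | h
    · have : n = 0 := by omega
      subst this; exact IsIC.one
    · exact IsIC.add (ih (by omega)) IsIC.one

lemma intComplexity_mem (n : ℕ) (hn : 1 ≤ n) : IsIC n (intComplexity n) :=
  Nat.sInf_mem ⟨n, isIC_self_s11 n hn⟩

lemma intComplexity_lb (n : ℕ) (hn : 1 ≤ n) :
    3 * Real.logb 3 n ≤ (intComplexity n : ℝ) := by
  have h := (intComplexity_mem n hn).cube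
  have h2 : ((n : ℝ)) ^ (3 : ℕ) ≤ (3 : ℝ) ^ (intComplexity n : ℕ) := by exact_mod_cast h
  have hn0 : (0 : ℝ) < n := by exact_mod_cast hn
  have h3 : Real.logb 3 ((n : ℝ) ^ (3 : ℕ)) ≤ Real.logb 3 ((3 : ℝ) ^ (intComplexity n : ℕ)) :=
    Real.logb_le_logb_of_le (by norm_num) (by positivity) h2
  rw [Real.logb_pow, Real.logb_pow, Real.logb_self_eq_one (by norm_num)] at h3
  simpa using h3

lemma alpha_ge (α : ℝ) (hub : ∀ n : ℕ, 1 < n → (intComplexity n : ℝ) ≤ α * Real.logb 3 n) :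
    (3 : ℝ) ≤ α := by
  have h1 : 3 * Real.logb 3 (3 : ℕ) ≤ (intComplexity 3 : ℝ) := intComplexity_lb 3 (by norm_num)
  have h2 : (intComplexity 3 : ℝ) ≤ α * Real.logb 3 (3 : ℕ) := hub 3 (by norm_num)
  have h3 : Real.logb 3 ((3 : ℕ) : ℝ) = 1 := by
    push_cast
    exact Real.logb_self_eq_one (by norm_num)
  rw [h3] at h1 h2
  linarith

set_option maxHeartbeats 2000000 in
theorem small_addendum_bound (α : ℝ) (hα : α < 6)
    (hub : ∀ n : ℕ, 1 < n → (intComplexity n : ℝ) ≤ α * Real.logb 3 n) :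
    (∀ n i : ℕ, 1 < n → 1 ≤ i → i ≤ n - i →
      intComplexity n = intComplexity i + intComplexity (n - i) →
      ∀ ℓ : ℝ, 0 < ℓ → ℓ < 1 →
        3 * ℓ * Real.logb 3 n + 3 * Real.logb 3 ((n : ℝ) - (n : ℝ) ^ ℓ)
          = α * Real.logb 3 n →
        (i : ℝ) ≤ (n : ℝ) ^ ℓ) ∧
    (∀ ε : ℝ, 0 < ε → ∃ N : ℕ, ∀ n i : ℕ, N < n → 1 ≤ i → i ≤ n - i →
      intComplexity n = intComplexity i + intComplexity (n - i) →
      (i : ℝ) ≤ (n : ℝ) ^ (α / 3 - 1 + ε)) := by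
  constructor
  · -- Part 1
    intro n i hn hi hile hfeq ℓ hl0 hl1 heq
    by_contra hcon
    push_neg at hcon
    set x : ℝ := (n : ℝ) ^ ℓ with hx
    have hn1 : (1 : ℝ) < n := by exact_mod_cast hn
    have hx1 : (1 : ℝ) < x :=
      (Real.one_lt_rpow_iff_of_pos (by linarith)).mpr (Or.inl ⟨hn1, hl0⟩)
    have hxn : x < n := by
      calc x < (n : ℝ) ^ (1 : ℝ) := Real.rpow_lt_rpow_of_exponent_lt hn1 hl1
        _ = n := Real.rpow_one n
    have hiR : (1 : ℝ) < i := lt_trans hx1 hcon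
    have hi2 : 2 ≤ i := by exact_mod_cast Nat.succ_le_of_lt (by exact_mod_cast hiR)
    have h2i : i + i ≤ n := by omega
    have h2iR : (i : ℝ) + i ≤ n := by exact_mod_cast h2i
    have hsub : ((n - i : ℕ) : ℝ) = (n : ℝ) - i := by
      have : i ≤ n := by omega
      push_cast [this]; ring
    have hfi : 3 * Real.logb 3 i ≤ (intComplexity i : ℝ) := intComplexity_lb i (by omega)
    have hfni : 3 * Real.logb 3 ((n : ℝ) - i) ≤ (intComplexity (n - i) : ℝ) := by
      have := intComplexity_lb (n - i) (by omega)
      rwa [hsub] at this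
    have hfn : (intComplexity n : ℝ) ≤ α * Real.logb 3 n := hub n hn
    have hfeqR : (intComplexity n : ℝ) = intComplexity i + intComplexity (n - i) := by
      exact_mod_cast hfeq
    have hlogx : Real.logb 3 x = ℓ * Real.logb 3 n := by
      rw [hx, Real.logb_rpow_eq_mul_logb_of_pos (by linarith)]
    have hxni : x < (n : ℝ) - i := lt_of_lt_of_le hcon (by linarith)
    have hprod : x * ((n : ℝ) - x) < (i : ℝ) * ((n : ℝ) - i) := by nlinarith
    have hlog : Real.logb 3 (x * ((n : ℝ) - x)) < Real.logb 3 ((i : ℝ) * ((n : ℝ) - i)) :=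
      Real.logb_lt_logb (by norm_num) (by nlinarith) hprod
    rw [Real.logb_mul (by positivity) (by nlinarith), Real.logb_mul (by positivity) (by nlinarith)]
      at hlog
    linarith
  · -- Part 2
    intro ε hε
    have hα3 := alpha_ge α hub
    refine ⟨⌈(3 : ℝ) ^ (Real.logb 3 2 / ε)⌉₊ + 1, ?_⟩
    intro n i hN hi hile hfeq
    have hn2 : 2 ≤ n := by omega
    have hn1 : (1 : ℝ) < n := by exact_mod_cast hn2
    have hcn : (3 : ℝ) ^ (Real.logb 3 2 / ε) < n := by
      have h1 : (3 : ℝ) ^ (Real.logb 3 2 / ε) ≤ ⌈(3 : ℝ) ^ (Real.logb 3 2 / ε)⌉₊ := Nat.le_ceil _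
      have h2 : ((⌈(3 : ℝ) ^ (Real.logb 3 2 / ε)⌉₊ + 1 : ℕ) : ℝ) < n := by exact_mod_cast hN
      push_cast at h2
      linarith
    clear hN
    have hLc : Real.logb 3 2 / ε ≤ Real.logb 3 n := by
      have h := Real.logb_le_logb_of_le (b := 3) (by norm_num) (by positivity) hcn.le
      rwa [Real.logb_rpow (by norm_num) (by norm_num)] at h
    have hεL : Real.logb 3 2 ≤ ε * Real.logb 3 n := by
      rw [div_le_iff₀ hε] at hLc
      linarith
    have hβ0 : 0 < α / 3 - 1 + ε := by linarith
    rcases Nat.lt_or_ge i 2 with hi1 | hi2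
    · have hone : i = 1 := by omega
      subst hone
      exact_mod_cast Real.one_le_rpow hn1.le hβ0.le
    · have h2i : i + i ≤ n := by omega
      have h2iR : (i : ℝ) + i ≤ n := by exact_mod_cast h2i
      have hsub : ((n - i : ℕ) : ℝ) = (n : ℝ) - i := by
        have : i ≤ n := by omega
        push_cast [this]; ring
      have hfn : (intComplexity n : ℝ) ≤ α * Real.logb 3 n := hub n (by omega)
      have hfi : 3 * Real.logb 3 i ≤ (intComplexity i : ℝ) := intComplexity_lb i (by omega)
      have hfni : 3 * Real.logb 3 ((n : ℝ) - i) ≤ (intComplexity (n - i) : ℝ) := by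
        have := intComplexity_lb (n - i) (by omega)
        rwa [hsub] at this
      have hfeqR : (intComplexity n : ℝ) = intComplexity i + intComplexity (n - i) := by
        exact_mod_cast hfeq
      have hiR2 : (2 : ℝ) ≤ i := by exact_mod_cast hi2
      have hhalf : (n : ℝ) / 2 ≤ (n : ℝ) - i := by linarith
      have hlb2 : Real.logb 3 ((n : ℝ) / 2) ≤ Real.logb 3 ((n : ℝ) - i) :=
        Real.logb_le_logb_of_le (by norm_num) (by linarith) hhalf
      have hdiv : Real.logb 3 ((n : ℝ) / 2) = Real.logb 3 n - Real.logb 3 2 :=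
        Real.logb_div (by linarith) (by norm_num)
      have hkey : Real.logb 3 (i : ℝ) ≤ (α / 3 - 1 + ε) * Real.logb 3 n := by
        nlinarith [hfi, hfni, hfeqR, hfn, hlb2, hdiv, hεL]
      rw [Real.logb_le_iff_le_rpow (by norm_num) (by linarith : (0 : ℝ) < i)] at hkey
      calc (i : ℝ) ≤ (3 : ℝ) ^ ((α / 3 - 1 + ε) * Real.logb 3 n) := hkey
        _ = (n : ℝ) ^ (α / 3 - 1 + ε) := by
            rw [mul_comm, Real.rpow_mul (by norm_num : (0 : ℝ) ≤ 3),
              Real.rpow_logb (by norm_num) (by norm_num) (by linarith : (0 : ℝ) < n)]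
end

section
/- The (min,+)-convolution of two length-n arrays of non-negative integers bounded by u, defined by c[i] = min_{0≤j≤i}(a[j] + b[i−j]), can be recovered from the classical convolution of the arrays a'[j] = (n+1)^{u − a[j]} and b'[j] = (n+1)^{u − b[j]}: specifically, c[i] = 2u − ⌊log_{n+1} c'[i]⌋ where c'[i] = Σ_{j=0}^{i} a'[j]·b'[i−j]. -/
/-! Each product `a'[j] * b'[i - j]` is `(n + 1) ^ (2u - (a j + b (i - j)))`, and at most `n` of
them are added, so no carries occur in base `n + 1`: the base-`(n + 1)` logarithm of `c'[i]` is the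
largest exponent, `2u - c[i]`. -/

open Finset

theorem Nat.log_sum_pow_eq_sup' {ι : Type*} {s : Finset ι} {b : ℕ} (hs : s.Nonempty)
    (hcard : #s < b) (f : ι → ℕ) :
    Nat.log b (∑ j ∈ s, b ^ f j) = s.sup' hs f := by
  obtain ⟨j, hj, hmax⟩ := s.exists_mem_eq_sup' hs f
  have hb : 0 < b := hs.card_pos.trans hcard
  apply Nat.log_eq_of_pow_le_of_lt_pow
  · rw [hmax]
    exact single_le_sum (f := fun j => b ^ f j) (fun _ _ => Nat.zero_le _) hj
  · calc ∑ j ∈ s, b ^ f j ≤ ∑ _ ∈ s, b ^ s.sup' hs f :=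
          sum_le_sum fun k hk => Nat.pow_le_pow_right hb (le_sup' f hk)
      _ = #s * b ^ s.sup' hs f := by rw [sum_const, smul_eq_mul]
      _ < b * b ^ s.sup' hs f := Nat.mul_lt_mul_of_pos_right hcard (Nat.pow_pos hb)
      _ = b ^ (s.sup' hs f + 1) := by ring

theorem Finset.sup'_tsub_eq_tsub_inf' {ι α : Type*} [LinearOrder α] [AddCommSemigroup α] [Sub α]
    [OrderedSub α] [AddLeftMono α] {s : Finset ι} (hs : s.Nonempty) (k : α) (e : ι → α) :
    s.sup' hs (fun j => k - e j) = k - s.inf' hs e := by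
  obtain ⟨j, hj, hmin⟩ := s.exists_mem_eq_inf' hs e
  refine le_antisymm (sup'_le hs _ fun x hx => tsub_le_tsub_left (inf'_le e hx) k) ?_
  rw [hmin]
  exact le_sup'_of_le (fun j => k - e j) hj le_rfl

def convIndices (n i : ℕ) : Finset ℕ :=
  (range (i + 1)).filter fun j => j < n ∧ i - j < n

section convIndices

variable {n i : ℕ}

theorem mem_convIndices {j : ℕ} : j ∈ convIndices n i ↔ j ≤ i ∧ j < n ∧ i - j < n := by
  simp only [convIndices, mem_filter, mem_range, Nat.lt_succ_iff]

theorem convIndices_nonempty (hi : i < 2 * n - 1) : (convIndices n i).Nonempty :=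
  ⟨i - (n - 1), mem_convIndices.2 (by omega)⟩

theorem card_convIndices_le : #(convIndices n i) ≤ n :=
  (card_le_card fun _ hj => mem_range.2 (mem_convIndices.1 hj).2.1).trans_eq (card_range n)

theorem sum_range_ite_mul_ite_eq_sum_convIndices (x y : ℕ → ℕ) :
    ∑ j ∈ range (i + 1), (if j < n then x j else 0) * (if i - j < n then y (i - j) else 0) =
      ∑ j ∈ convIndices n i, x j * y (i - j) := by
  simp only [ite_zero_mul_ite_zero, convIndices, sum_filter]

theorem sInf_convIndices_eq_inf' (hs : (convIndices n i).Nonempty) (c : ℕ → ℕ) :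
    sInf {v | ∃ j, j ≤ i ∧ j < n ∧ i - j < n ∧ v = c j} = (convIndices n i).inf' hs c := by
  rw [inf'_eq_csInf_image]
  congr 1
  ext v
  simp [mem_convIndices, and_assoc, eq_comm]

end convIndices

theorem minplus_conv_from_classical_conv_general (n u : ℕ) (a b : ℕ → ℕ)
    (ha : ∀ j < n, a j ≤ u) (hb : ∀ j < n, b j ≤ u) :
    ∀ i < 2 * n - 1,
      sInf {v | ∃ j, j ≤ i ∧ j < n ∧ i - j < n ∧ v = a j + b (i - j)} =
        2 * u - Nat.log (n + 1)
          (∑ j ∈ Finset.range (i + 1),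
            (if j < n then (n + 1) ^ (u - a j) else 0) *
            (if i - j < n then (n + 1) ^ (u - b (i - j)) else 0)) := by
  intro i hi
  have hs := convIndices_nonempty hi
  have hab : ∀ j ∈ convIndices n i, a j ≤ u ∧ b (i - j) ≤ u := fun j hj => by
    obtain ⟨-, hjn, hijn⟩ := mem_convIndices.1 hj
    exact ⟨ha j hjn, hb (i - j) hijn⟩
  have hterm : ∀ j ∈ convIndices n i,
      (n + 1) ^ (u - a j) * (n + 1) ^ (u - b (i - j)) = (n + 1) ^ (2 * u - (a j + b (i - j))) :=
    fun j hj => by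
      rw [← pow_add]
      have := hab j hj
      congr 1
      omega
  have hmin_le : (convIndices n i).inf' hs (fun j => a j + b (i - j)) ≤ 2 * u := by
    obtain ⟨j, hj⟩ := hs
    have := hab j hj
    exact (inf'_le _ hj).trans (by omega)
  rw [sum_range_ite_mul_ite_eq_sum_convIndices (fun j => (n + 1) ^ (u - a j))
      (fun j => (n + 1) ^ (u - b j)), sum_congr rfl hterm,
    Nat.log_sum_pow_eq_sup' hs (Nat.lt_succ_of_le card_convIndices_le), sup'_tsub_eq_tsub_inf',
    Nat.sub_sub_self hmin_le, sInf_convIndices_eq_inf' hs]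

theorem minplus_conv_from_classical_conv (n u : ℕ) (hn : 0 < n) (a b : ℕ → ℕ)
    (ha : ∀ j < n, a j ≤ u) (hb : ∀ j < n, b j ≤ u) :
    ∀ i < 2 * n - 1,
      sInf {v | ∃ j, j ≤ i ∧ j < n ∧ i - j < n ∧ v = a j + b (i - j)} =
        2 * u - Nat.log (n + 1)
          (∑ j ∈ Finset.range (i + 1),
            (if j < n then (n + 1) ^ (u - a j) else 0) *
            (if i - j < n then (n + 1) ^ (u - b (i - j)) else 0)) :=
  minplus_conv_from_classical_conv_general n u a b ha hb
end

section
/- For every positive integer n > 1, if the optimal expression for f(n) ends in an addition n = a₁ + a₂ + ... + a_k (k ≥ 2) with f(n) = f(a₁) + ... + f(a_k) where each f(a_j) is realized by an expression ending in multiplication or a_j = 1, and a_k is the largest term, then f(n) = f(n − a_k) + f'(a_k), where f'(m) denotes the minimum number of 1's in an expression for m whose last operation is a multiplication (with f'(1) = 1). -/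
/-- `intComplexityMul n` : the minimum number of 1's in an expression for `n`
whose last (outermost) operation is a multiplication, with the special case
`intComplexityMul 1 = 1`. -/
noncomputable def intComplexityMul (n : ℕ) : ℕ :=
  if n = 1 then 1
  else sInf {k | ∃ a b m l, IsIC a m ∧ IsIC b l ∧ n = a * b ∧ k = m + l}

lemma isic_one_le {n k : ℕ} (h : IsIC n k) : 1 ≤ k := by
  induction h <;> omega

lemma isic_self (n : ℕ) (h : 1 ≤ n) : IsIC n n := by
  induction n with
  | zero => omega
  | succ n ih =>
    rcases Nat.eq_or_lt_of_le h with h1 | h1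
    · simpa [← h1] using IsIC.one
    · exact IsIC.add (ih (by omega)) IsIC.one

lemma ic_mem (n : ℕ) (h : 1 ≤ n) : IsIC n (intComplexity n) :=
  Nat.sInf_mem ⟨n, isic_self n h⟩

lemma ic_le {n k : ℕ} (h : IsIC n k) : intComplexity n ≤ k :=
  Nat.sInf_le h

lemma ic_one : intComplexity 1 = 1 :=
  le_antisymm (ic_le IsIC.one) (isic_one_le (ic_mem 1 le_rfl))

lemma isic_sum {ι : Type*} (a : ι → ℕ) (hpos : ∀ j, 1 ≤ a j)
    (s : Finset ι) (hs : s.Nonempty) :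
    IsIC (∑ j ∈ s, a j) (∑ j ∈ s, intComplexity (a j)) := by
  induction hs using Finset.Nonempty.cons_induction with
  | singleton j => simpa using ic_mem (a j) (hpos j)
  | cons j s hj hs ih =>
    rw [Finset.sum_cons, Finset.sum_cons]
    exact IsIC.add (ic_mem (a j) (hpos j)) ih

theorem peel_largest_multiplicative_summand (n k : ℕ) (hn : 1 < n) (hk : 2 ≤ k)
    (a : Fin k → ℕ) (hpos : ∀ j, 1 ≤ a j)
    (hsum : n = ∑ j, a j)
    (hopt : intComplexity n = ∑ j, intComplexity (a j))
    (hmult : ∀ j, a j = 1 ∨ intComplexityMul (a j) = intComplexity (a j))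
    (m : Fin k) (hmax : ∀ j, a j ≤ a m) :
    intComplexity n = intComplexity (n - a m) + intComplexityMul (a m) := by
  have hfm : intComplexityMul (a m) = intComplexity (a m) := by
    rcases hmult m with h1 | h1
    · rw [h1, ic_one, intComplexityMul, if_pos rfl]
    · exact h1
  rw [hfm]
  have hne : (Finset.univ.erase m).Nonempty := by
    have : 2 ≤ (Finset.univ : Finset (Fin k)).card := by simpa using hk
    rw [← Finset.card_pos, Finset.card_erase_of_mem (Finset.mem_univ m)]
    omega
  have hsplit : n = (∑ j ∈ Finset.univ.erase m, a j) + a m := by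
    rw [hsum, Finset.sum_erase_add _ _ (Finset.mem_univ m)]
  have hsub : n - a m = ∑ j ∈ Finset.univ.erase m, a j := by omega
  have h1 : 1 ≤ n - a m := by
    obtain ⟨j, hj⟩ := hne
    have := Finset.single_le_sum (f := a) (fun i _ => Nat.zero_le _) hj
    have := hpos j
    omega
  have hle : intComplexity (n - a m) ≤ ∑ j ∈ Finset.univ.erase m, intComplexity (a j) := by
    rw [hsub]
    exact ic_le (isic_sum a hpos _ hne)
  have hge : intComplexity n ≤ intComplexity (n - a m) + intComplexity (a m) := by
    have h := IsIC.add (ic_mem (n - a m) h1) (ic_mem (a m) (hpos m))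
    rw [show n - a m + a m = n by omega] at h
    exact ic_le h
  have hsum' : (∑ j, intComplexity (a j)) =
      (∑ j ∈ Finset.univ.erase m, intComplexity (a j)) + intComplexity (a m) := by
    rw [Finset.sum_erase_add _ _ (Finset.mem_univ m)]
  omega
end
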